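/- arXiv:2203.14394 — 2 statements merged into one kernel-verified Lean document; each statement's English description precedes it below -/
import Mathlib

section
/- Define modified radii r⁻_{l−1} = (1 − 1/φ(l−1))·r_{l−1} and r⁺_l = (1 + 1/φ(l))·r_l, where r_l = r₀·e^{−l} and 0 < r₀ < 1 is small. If h(x) = 2·arctan(x/2) satisfies x − x³ ≤ h(x) ≤ x on [0, r₀], and φ(l) ≥ φ(l−1) ≥ C for a sufficiently large constant C (in particular e·φ(l) ≥ φ(l−1)), then h(r⁻_{l−1}) + (1/1000)·h(r_{l + log φ(l)}) ≤ h(r_{l−1}) and h(r_l) + (1/1000)·h(r_{l + log φ(l)}) ≤ h(r⁺_l), where r_{l + log φ(l)} := r_l/φ(l). -/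
/-!
Write `h x = 2 arctan (x / 2)`, so that `h' x = 1 / (1 + x² / 4)` lies in `[4/5, 1]` on `[-1, 1]`.
By the mean value theorem `h s ≤ s` for `s ≥ 0`, while `h` gains at least `(4/5) (y - x)` from `x`
to `y` inside `[-1, 1]`; so whenever `0 ≤ s ≤ y - x`, the term `h s / 1000` fits into the gap
`h y - h x`. Both modified radii differ from the unmodified ones by at least `r_l / φ(l)`: for
`r⁺_l` by exactly that, for `r⁻_{l-1}` by `r_{l-1} / φ(l-1) = e r_l / φ(l-1) ≥ r_l / φ(l)`.
The constant `C = 1` already works.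
-/

open Real

lemma hasDerivAt_two_mul_arctan_half (x : ℝ) :
    HasDerivAt (fun t => 2 * arctan (t / 2)) (1 / (1 + (x / 2) ^ 2)) x := by
  have := ((hasDerivAt_arctan (x / 2)).comp x ((hasDerivAt_id x).div_const 2)).const_mul 2
  exact this.congr_deriv (by ring)

lemma differentiable_two_mul_arctan_half : Differentiable ℝ fun t : ℝ => 2 * arctan (t / 2) :=
  fun x => (hasDerivAt_two_mul_arctan_half x).differentiableAt

lemma deriv_two_mul_arctan_half :
    deriv (fun t : ℝ => 2 * arctan (t / 2)) = fun x => 1 / (1 + (x / 2) ^ 2) :=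
  funext fun x => (hasDerivAt_two_mul_arctan_half x).deriv

lemma two_mul_arctan_half_le_self {s : ℝ} (hs : 0 ≤ s) : 2 * arctan (s / 2) ≤ s := by
  have hderiv_le (x : ℝ) : deriv (fun t : ℝ => 2 * arctan (t / 2)) x ≤ 1 := by
    rw [deriv_two_mul_arctan_half, div_le_one (by positivity)]
    nlinarith [sq_nonneg (x / 2)]
  simpa using image_sub_le_mul_sub_of_deriv_le differentiable_two_mul_arctan_half hderiv_le hs

lemma mul_sub_le_two_mul_arctan_half_sub {x y : ℝ} (hx : -1 ≤ x) (hy : y ≤ 1) (hxy : x ≤ y) :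
    4 / 5 * (y - x) ≤ 2 * arctan (y / 2) - 2 * arctan (x / 2) := by
  have hderiv_ge : ∀ t ∈ interior (Set.Icc (-1 : ℝ) 1),
      4 / 5 ≤ deriv (fun t : ℝ => 2 * arctan (t / 2)) t := by
    intro t ht
    rw [interior_Icc] at ht
    rw [deriv_two_mul_arctan_half, le_div_iff₀ (by positivity)]
    nlinarith [ht.1, ht.2]
  exact (convex_Icc (-1 : ℝ) 1).mul_sub_le_image_sub_of_le_deriv
    differentiable_two_mul_arctan_half.continuous.continuousOn
    differentiable_two_mul_arctan_half.differentiableOn hderiv_ge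
    x ⟨hx, hxy.trans hy⟩ y ⟨hx.trans hxy, hy⟩ hxy

lemma two_mul_arctan_half_add_mul_le {x y s c : ℝ} (hx : -1 ≤ x) (hy : y ≤ 1) (hs : 0 ≤ s)
    (hsxy : s ≤ y - x) (hc₀ : 0 ≤ c) (hc : c ≤ 4 / 5) :
    2 * arctan (x / 2) + c * (2 * arctan (s / 2)) ≤ 2 * arctan (y / 2) := by
  have hgain := mul_sub_le_two_mul_arctan_half_sub hx hy (by linarith)
  have hcost : c * (2 * arctan (s / 2)) ≤ c * (y - x) :=
    mul_le_mul_of_nonneg_left ((two_mul_arctan_half_le_self hs).trans hsxy) hc₀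
  have hc_gap : c * (y - x) ≤ 4 / 5 * (y - x) := mul_le_mul_of_nonneg_right hc (by linarith)
  linarith

lemma exp_neg_natCast_pred {l : ℕ} (hl : 1 ≤ l) :
    exp (-((l - 1 : ℕ) : ℝ)) = exp 1 * exp (-(l : ℝ)) := by
  rw [Nat.cast_pred hl, ← exp_add]
  ring_nf

/-- Modified radii estimates: with `h(x) = 2 arctan(x/2)`, `r_l = r₀ e^{−l}`,
`r⁻_{l−1} = (1 − 1/φ(l−1)) r_{l−1}`, `r⁺_l = (1 + 1/φ(l)) r_l`, and
`r_{l+log φ(l)} := r_l/φ(l)`: if `x − x³ ≤ h(x) ≤ x` on `[0, r₀]`, `0 < r₀ < 1`,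
and `φ(l) ≥ φ(l−1) ≥ C` for a sufficiently large constant `C` (in particular
`e·φ(l) ≥ φ(l−1)`), then
`h(r⁻_{l−1}) + (1/1000) h(r_{l+log φ(l)}) ≤ h(r_{l−1})` and
`h(r_l) + (1/1000) h(r_{l+log φ(l)}) ≤ h(r⁺_l)`. -/
theorem stmt5 :
    ∃ C : ℝ, ∀ (r₀ : ℝ) (φ : ℕ → ℝ) (l : ℕ), 0 < r₀ → r₀ < 1 → 1 ≤ l →
      (∀ x : ℝ, 0 ≤ x → x ≤ r₀ →
        x - x ^ 3 ≤ 2 * Real.arctan (x / 2) ∧ 2 * Real.arctan (x / 2) ≤ x) →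
      C ≤ φ (l - 1) → φ (l - 1) ≤ φ l → φ (l - 1) ≤ Real.exp 1 * φ l →
      (let h : ℝ → ℝ := fun x => 2 * Real.arctan (x / 2)
       let r : ℕ → ℝ := fun m => r₀ * Real.exp (-(m : ℝ))
       h ((1 - 1 / φ (l - 1)) * r (l - 1)) + (1 / 1000) * h (r l / φ l) ≤ h (r (l - 1)) ∧
       h (r l) + (1 / 1000) * h (r l / φ l) ≤ h ((1 + 1 / φ l) * r l)) := by
  refine ⟨1, fun r₀ φ l hr₀ hr₀_lt hl _ hφ_pred hφ_mono hφ_exp => ?_⟩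
  have hφ : 1 ≤ φ l := hφ_pred.trans hφ_mono
  set b := r₀ * exp (-(l : ℝ))
  have hb : 0 < b := by positivity
  have hr_pred : r₀ * exp (-((l - 1 : ℕ) : ℝ)) = exp 1 * b := by
    rw [exp_neg_natCast_pred hl]; ring
  have hr_pred_lt : exp 1 * b < 1 := by
    rw [← hr_pred]
    exact (mul_le_of_le_one_right hr₀.le (exp_le_one_iff.mpr (by simp))).trans_lt hr₀_lt
  dsimp only
  rw [hr_pred]
  constructor
  · have hshrink : 0 ≤ 1 - 1 / φ (l - 1) :=
      sub_nonneg.mpr ((div_le_one (by linarith)).mpr hφ_pred)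
    have hgap : b / φ l ≤ exp 1 * b - (1 - 1 / φ (l - 1)) * (exp 1 * b) := by
      rw [show exp 1 * b - (1 - 1 / φ (l - 1)) * (exp 1 * b) = exp 1 * b / φ (l - 1) by ring,
        div_le_div_iff₀ (by linarith) (by linarith)]
      linarith [mul_le_mul_of_nonneg_left hφ_exp hb.le]
    exact two_mul_arctan_half_add_mul_le
      (neg_one_lt_zero.le.trans (mul_nonneg hshrink (by positivity))) hr_pred_lt.le
      (by positivity) hgap (by norm_num) (by norm_num)
  · have hr_succ : (1 + 1 / φ l) * b ≤ 1 := by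
      nlinarith [one_div_le_one_div_of_le zero_lt_one hφ, add_one_le_exp (1 : ℝ)]
    exact two_mul_arctan_half_add_mul_le (by linarith) hr_succ (by positivity) (le_of_eq (by ring))
      (by norm_num) (by norm_num)
end

section
/- Suppose for each pair y ≠ y' in a finite index set F_L with |F_L| ≍ e^{2L} one has the two-point bound P(I_y ∩ I_{y'}) ≤ c'(1+z)e^{−4L+2k}e^{−2z}e^{−c·k_L^{1/4}} whenever (y,y') ∈ G_k (1 ≤ k ≤ L), the one-point bound c₀(1+z)e^{−2L}e^{−2z} ≤ P(I_y) ≤ C₀(1+z)e^{−2L}e^{−2z}, and |G_k| ≤ C·e^{4L−2k} for each k, where k_L = min(k, L−k). Then by the Paley–Zygmund / second-moment inequality, P(∪_{y∈F_L} I_y) ≥ (E J)²/E[J²] ≥ (1+z)e^{−2z}/((1+z)e^{−2z} + c) for J = Σ_y 1_{I_y} and some constant c independent of L and z (for z in the range [0, log L] and L large), since Σ_k |G_k|·sup_{(y,y')∈G_k} P(I_y ∩ I_{y'}) ≤ C'·(1+z)e^{−2z}·(E J) and (E J) ≍ (1+z)e^{−2z}·|F_L|·e^{−2L} ≍ (1+z)e^{−2z}.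 -/
/-!
Write `J = ∑ y, 1_{I y}`. Since `J = J · 1_{⋃ I y}`, Cauchy–Schwarz gives
`(E J)² ≤ P(⋃ I y) · E[J²]`, and `E[J²]` is `E J` plus the sum over off-diagonal pairs.
Grouping the pairs by scale, `|G k|` times the two-point bound is
`C c' (1+z) e^{-2z} e^{-c k_L^{1/4}}`, and `∑ k, e^{-c k_L^{1/4}}` is at most twice the
(finite) sum of `e^{-c n^{1/4}}` over all `n`. With `E J ≥ (c₀/C)(1+z) e^{-2z}` and the
monotonicity of `x ↦ x² / (x + D)` this yields the bound.
-/

open MeasureTheory Finset Filter Topology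
open scoped ENNReal

section SecondMoment

variable {Ω : Type*} [MeasurableSpace Ω] {μ : Measure Ω}

theorem lintegral_sq_le_measure_mul_lintegral_sq {f : Ω → ℝ≥0∞} (hf : AEMeasurable f μ)
    {s : Set Ω} (hs : MeasurableSet s) (hfs : ∀ ω ∉ s, f ω = 0) :
    (∫⁻ ω, f ω ∂μ) ^ 2 ≤ μ s * ∫⁻ ω, f ω ^ 2 ∂μ := by
  have hf_eq : f * s.indicator 1 = f := by
    ext ω
    by_cases hω : ω ∈ s <;> simp [hω, hfs]
  have hind_sq : ∀ ω, s.indicator (1 : Ω → ℝ≥0∞) ω ^ 2 = s.indicator 1 ω := by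
    intro ω
    by_cases hω : ω ∈ s <;> simp [hω]
  have hCS := ENNReal.lintegral_mul_le_Lp_mul_Lq μ Real.HolderConjugate.two_two hf
    (g := s.indicator 1) (aemeasurable_one.indicator hs)
  simp only [hf_eq, ENNReal.rpow_two, hind_sq, lintegral_indicator_one hs] at hCS
  calc (∫⁻ ω, f ω ∂μ) ^ 2
      ≤ ((∫⁻ ω, f ω ^ 2 ∂μ) ^ (1 / 2 : ℝ) * μ s ^ (1 / 2 : ℝ)) ^ 2 := by gcongr
    _ = μ s * ∫⁻ ω, f ω ^ 2 ∂μ := by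
      rw [mul_pow, ← ENNReal.rpow_two, ← ENNReal.rpow_two, ← ENNReal.rpow_mul,
        ← ENNReal.rpow_mul]
      norm_num [mul_comm]

theorem sum_measure_sq_le_measure_iUnion_mul_sum_inter {ι : Type*} [Fintype ι]
    {I : ι → Set Ω} (hI : ∀ y, MeasurableSet (I y)) :
    (∑ y, μ (I y)) ^ 2 ≤ μ (⋃ y, I y) * ∑ y, ∑ y', μ (I y ∩ I y') := by
  set J : Ω → ℝ≥0∞ := fun ω => ∑ y, (I y).indicator 1 ω
  have hJ_sq : ∀ ω, J ω ^ 2 = ∑ y, ∑ y', (I y ∩ I y').indicator 1 ω := by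
    simp [J, sq, sum_mul_sum, Set.inter_indicator_one]
  have hJ_support : ∀ ω ∉ ⋃ y, I y, J ω = 0 := by
    intro ω hω
    simp only [Set.mem_iUnion, not_exists] at hω
    simp [J, hω]
  have key := lintegral_sq_le_measure_mul_lintegral_sq (μ := μ)
    (measurable_sum _ fun y _ => measurable_one.indicator (hI y)).aemeasurable
    (MeasurableSet.iUnion hI) hJ_support
  simp only [hJ_sq, J] at key
  simpa only [lintegral_finsetSum _ fun y _ => measurable_one.indicator (hI y),
    lintegral_finsetSum _ fun y _ => measurable_sum _ fun y' _ =>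
      measurable_one.indicator ((hI y).inter (hI y')),
    lintegral_finsetSum _ fun y' _ => measurable_one.indicator ((hI _).inter (hI y')),
    lintegral_indicator_one (hI _), lintegral_indicator_one ((hI _).inter (hI _))] using key

theorem Finset.sum_sum_eq_sum_add_sum_offDiag {ι M : Type*} [DecidableEq ι] [AddCommMonoid M]
    (s : Finset ι) (f : ι → ι → M) :
    ∑ x ∈ s, ∑ y ∈ s, f x y = ∑ x ∈ s, f x x + ∑ p ∈ s.offDiag, f p.1 p.2 := by
  rw [← sum_product', ← diag_union_offDiag,
    sum_union (disjoint_diag_offDiag s), sum_diag]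

theorem sum_measureReal_sq_le_measureReal_iUnion_mul [IsFiniteMeasure μ] {ι : Type*}
    [Fintype ι] [DecidableEq ι] {I : ι → Set Ω} (hI : ∀ y, MeasurableSet (I y)) :
    (∑ y, μ.real (I y)) ^ 2 ≤ μ.real (⋃ y, I y) *
      (∑ y, μ.real (I y) + ∑ p ∈ univ.offDiag, μ.real (I p.1 ∩ I p.2)) := by
  have h := sum_measure_sq_le_measure_iUnion_mul_sum_inter (μ := μ) hI
  rw [sum_sum_eq_sum_add_sum_offDiag] at h
  simp only [Set.inter_self] at h
  have h' := ENNReal.toReal_mono (by simp [ENNReal.mul_eq_top, measure_ne_top]) h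
  simpa [ENNReal.toReal_add, ENNReal.toReal_sum, measure_ne_top, ← measureReal_def] using h'

end SecondMoment

theorem Finset.sum_biUnion_le_sum_sum {κ α : Type*} [DecidableEq α] {s : Finset κ}
    {t : κ → Finset α} {f : α → ℝ} (hf : ∀ a, 0 ≤ f a) :
    ∑ a ∈ s.biUnion t, f a ≤ ∑ k ∈ s, ∑ a ∈ t k, f a := by
  rw [← sup_eq_biUnion]
  refine apply_sup_le_sum (f := fun u => ∑ a ∈ u, f a) sum_empty ?_ s
  intro u v
  rw [← sum_union_inter]
  exact le_add_of_nonneg_right (sum_nonneg fun a _ => hf a)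

theorem sum_offDiag_le_sum_card_mul {ι κ : Type*} [Fintype ι] [DecidableEq ι]
    {g : ι × ι → ℝ} (hg : ∀ p, 0 ≤ g p) {s : Finset κ} {G : κ → Finset (ι × ι)}
    {N b : κ → ℝ} (hb : ∀ k, 0 ≤ b k)
    (hcover : ∀ y y' : ι, y ≠ y' → ∃ k ∈ s, (y, y') ∈ G k)
    (hcard : ∀ k ∈ s, (#(G k) : ℝ) ≤ N k)
    (hpair : ∀ k ∈ s, ∀ p ∈ G k, p.1 ≠ p.2 → g p ≤ b k) :
    ∑ p ∈ univ.offDiag, g p ≤ ∑ k ∈ s, N k * b k := by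
  classical
  have h_sub : univ.offDiag ⊆ s.biUnion fun k => (G k).filter fun p => p.1 ≠ p.2 := by
    rintro ⟨y, y'⟩ hp
    obtain ⟨-, -, hne⟩ := mem_offDiag.1 hp
    obtain ⟨k, hk, hkG⟩ := hcover y y' hne
    exact mem_biUnion.2 ⟨k, hk, mem_filter.2 ⟨hkG, hne⟩⟩
  refine (sum_le_sum_of_subset_of_nonneg h_sub fun p _ _ => hg p).trans <|
    (sum_biUnion_le_sum_sum hg).trans <| sum_le_sum fun k hk => ?_
  calc ∑ p ∈ (G k).filter (fun p => p.1 ≠ p.2), g p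
      ≤ #((G k).filter fun p => p.1 ≠ p.2) • b k :=
        sum_le_card_nsmul _ _ _ fun p hp =>
          hpair k hk p (mem_filter.1 hp).1 (mem_filter.1 hp).2
    _ ≤ N k * b k := by
        rw [nsmul_eq_mul]
        gcongr
        · exact hb k
        · exact (Nat.cast_le.2 (card_filter_le _ _)).trans (hcard k hk)

theorem div_add_le_of_sq_le_mul_add {α β a S D u : ℝ} (hα : 0 < α) (hβ : 0 ≤ β)
    (ha : 0 < a) (hS : α * a ≤ S) (hD_nonneg : 0 ≤ D) (hD : D ≤ β * a)
    (h : S ^ 2 ≤ u * (S + D)) :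
    a / (a + (α + β) / α ^ 2) ≤ u := by
  have hαa : 0 < α * a := by positivity
  have hS_pos : 0 < S := hαa.trans_le hS
  have hu : 0 ≤ u := by nlinarith
  have h_mono : (α * a) ^ 2 * (S + β * a) ≤ S ^ 2 * (α * a + β * a) := by
    nlinarith [mul_nonneg (sub_nonneg.2 hS) (add_nonneg (mul_nonneg hαa.le hS_pos.le)
      (mul_nonneg (mul_nonneg hβ ha.le) (add_nonneg hS_pos.le hαa.le)))]
  have h_lower : (α * a) ^ 2 ≤ u * (α * a + β * a) := by
    refine le_of_mul_le_mul_right (h_mono.trans ?_) (by nlinarith : 0 < S + β * a)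
    calc S ^ 2 * (α * a + β * a) ≤ u * (S + D) * (α * a + β * a) := by gcongr
      _ ≤ u * (α * a + β * a) * (S + β * a) := by nlinarith [mul_le_mul_of_nonneg_left hD hu]
  have h_main : a ≤ u * ((α + β) / α ^ 2) := by
    rw [← mul_div_assoc, le_div_iff₀ (by positivity)]
    nlinarith
  rw [div_le_iff₀ (by positivity)]
  nlinarith [mul_nonneg hu ha.le]

theorem Real.summable_exp_neg_mul_rpow {c p : ℝ} (hc : 0 < c) (hp : 0 < p) :
    Summable fun n : ℕ => Real.exp (-c * (n : ℝ) ^ p) := by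
  have h_decay :
      Tendsto (fun x : ℝ => (x ^ p) ^ (2 / p) * Real.exp (-c * x ^ p)) atTop (𝓝 0) :=
    (tendsto_rpow_mul_exp_neg_mul_atTop_nhds_zero (2 / p) c hc).comp (tendsto_rpow_atTop hp)
  refine .of_norm_bounded_eventually_nat (g := fun n : ℕ => 1 / (n : ℝ) ^ 2)
    (Real.summable_one_div_nat_pow.2 one_lt_two) ?_
  filter_upwards [(h_decay.comp tendsto_natCast_atTop_atTop).eventually
    (eventually_le_nhds zero_lt_one), eventually_gt_atTop 0] with n hn hn_pos
  have hn_pos : (0 : ℝ) < n := Nat.cast_pos.2 hn_pos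
  rw [Function.comp_apply, ← Real.rpow_mul hn_pos.le, mul_div_cancel₀ _ hp.ne', Real.rpow_two]
    at hn
  rw [Real.norm_of_nonneg (Real.exp_pos _).le, le_div_iff₀ (by positivity), mul_comm]
  exact hn

theorem sum_Icc_min_sub_le_two_mul_tsum {f : ℕ → ℝ} (hf_nonneg : ∀ n, 0 ≤ f n)
    (hf : Summable f) (L : ℕ) : ∑ k ∈ Icc 1 L, f (min k (L - k)) ≤ 2 * ∑' n, f n := by
  have h_reflect : ∑ k ∈ Icc 1 L, f (L - k) = ∑ j ∈ (Icc 1 L).image (L - ·), f j := by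
    refine (sum_image fun x hx y hy hxy => ?_).symm
    simp only [coe_Icc, Set.mem_Icc] at hx hy hxy
    omega
  calc ∑ k ∈ Icc 1 L, f (min k (L - k))
      ≤ ∑ k ∈ Icc 1 L, (f k + f (L - k)) := by
        refine sum_le_sum fun k _ => ?_
        rcases min_choice k (L - k) with h | h <;> rw [h]
        · exact le_add_of_nonneg_right (hf_nonneg _)
        · exact le_add_of_nonneg_left (hf_nonneg _)
    _ = ∑ k ∈ Icc 1 L, f k + ∑ j ∈ (Icc 1 L).image (L - ·), f j := by
        rw [sum_add_distrib, h_reflect]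
    _ ≤ ∑' n, f n + ∑' n, f n := by
        gcongr <;> exact hf.sum_le_tsum _ fun n _ => hf_nonneg n
    _ = 2 * ∑' n, f n := by ring

section ScaleBounds

variable {Ω ι : Type*} [MeasurableSpace Ω] {P : Measure Ω} [Fintype ι]
  {I : ι → Set Ω} {L : ℕ} {z C : ℝ}

theorem mul_le_sum_measureReal_of_exp_le_card [IsFiniteMeasure P] {c₀ : ℝ} (hc₀ : 0 ≤ c₀)
    (hz : 0 ≤ z) (hC : 0 < C)
    (hcard : Real.exp (2 * L) ≤ C * Fintype.card ι)
    (hone : ∀ y,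
      ENNReal.ofReal (c₀ * (1 + z) * Real.exp (-2 * L) * Real.exp (-2 * z)) ≤ P (I y)) :
    c₀ / C * ((1 + z) * Real.exp (-2 * z)) ≤ ∑ y, P.real (I y) := by
  have hexp : Real.exp (2 * L) * Real.exp (-2 * L) = 1 := by rw [← Real.exp_add]; simp
  calc c₀ / C * ((1 + z) * Real.exp (-2 * z))
      = Real.exp (2 * L) / C * (c₀ * (1 + z) * Real.exp (-2 * L) * Real.exp (-2 * z)) := by
        linear_combination (-(c₀ / C * (1 + z) * Real.exp (-2 * z))) * hexp
    _ ≤ Fintype.card ι • (c₀ * (1 + z) * Real.exp (-2 * L) * Real.exp (-2 * z)) := by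
        rw [nsmul_eq_mul]
        gcongr
        rwa [div_le_iff₀' hC]
    _ ≤ ∑ y, P.real (I y) := card_nsmul_le_sum _ _ _ fun y _ =>
        (ENNReal.ofReal_le_iff_le_toReal (measure_ne_top _ _)).1 (hone y)

theorem sum_offDiag_measureReal_inter_le [DecidableEq ι] {c c' : ℝ} (hc' : 0 ≤ c')
    (hz : 0 ≤ z) {G : ℕ → Finset (ι × ι)}
    (hcover : ∀ y y' : ι, y ≠ y' → ∃ k, 1 ≤ k ∧ k ≤ L ∧ (y, y') ∈ G k)
    (hG : ∀ k, 1 ≤ k → k ≤ L → ((G k).card : ℝ) ≤ C * Real.exp (4 * L - 2 * k))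
    (htwo : ∀ k, 1 ≤ k → k ≤ L → ∀ p ∈ G k, p.1 ≠ p.2 →
      P (I p.1 ∩ I p.2) ≤
        ENNReal.ofReal (c' * (1 + z) * Real.exp (-(4 * L) + 2 * k) * Real.exp (-2 * z) *
          Real.exp (-c * ((min k (L - k) : ℕ) : ℝ) ^ ((1 : ℝ) / 4)))) :
    ∑ p ∈ univ.offDiag, P.real (I p.1 ∩ I p.2) ≤
      C * c' * ((1 + z) * Real.exp (-2 * z)) *
        ∑ k ∈ Icc 1 L, Real.exp (-c * ((min k (L - k) : ℕ) : ℝ) ^ ((1 : ℝ) / 4)) := by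
  refine (sum_offDiag_le_sum_card_mul (fun p => measureReal_nonneg) (fun k => by positivity)
    (fun y y' h => by simpa [and_assoc] using hcover y y' h)
    (fun k hk => hG k (mem_Icc.1 hk).1 (mem_Icc.1 hk).2)
    (fun k hk p hp hne => ENNReal.toReal_le_of_le_ofReal (by positivity)
      (htwo k (mem_Icc.1 hk).1 (mem_Icc.1 hk).2 p hp hne))).trans_eq ?_
  rw [mul_sum]
  refine sum_congr rfl fun k _ => ?_
  have hexp : Real.exp (4 * L - 2 * k) * Real.exp (-(4 * L) + 2 * k) = 1 := by
    rw [← Real.exp_add]; simp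
  linear_combination (C * c' * (1 + z) * Real.exp (-2 * z) *
    Real.exp (-c * ((min k (L - k) : ℕ) : ℝ) ^ ((1 : ℝ) / 4))) * hexp

end ScaleBounds

theorem stmt19_general (c' c c₀ C₀ C : ℝ) (hc' : 0 < c') (hc : 0 < c) (hc₀ : 0 < c₀)
    (hC : 0 < C) :
    ∃ (cc : ℝ) (L₀ : ℕ), 0 < cc ∧
      ∀ (L : ℕ) (z : ℝ) (Ω : Type) (_ : MeasurableSpace Ω) (P : Measure Ω),
        IsProbabilityMeasure P →
        ∀ (ι : Type) (_ : Fintype ι) (I : ι → Set Ω) (G : ℕ → Finset (ι × ι)),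
          L₀ ≤ L → 0 ≤ z → z ≤ Real.log L →
          (∀ y, MeasurableSet (I y)) →
          ((Fintype.card ι : ℝ) ≤ C * Real.exp (2 * L)) →
          (Real.exp (2 * L) ≤ C * (Fintype.card ι : ℝ)) →
          (∀ y y' : ι, y ≠ y' → ∃ k, 1 ≤ k ∧ k ≤ L ∧ (y, y') ∈ G k) →
          (∀ k, 1 ≤ k → k ≤ L →
            ((G k).card : ℝ) ≤ C * Real.exp (4 * L - 2 * k)) →
          (∀ y, ENNReal.ofReal (c₀ * (1 + z) * Real.exp (-2 * L) * Real.exp (-2 * z)) ≤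
              P (I y) ∧
            P (I y) ≤
              ENNReal.ofReal (C₀ * (1 + z) * Real.exp (-2 * L) * Real.exp (-2 * z))) →
          (∀ k, 1 ≤ k → k ≤ L → ∀ p ∈ G k, p.1 ≠ p.2 →
            P (I p.1 ∩ I p.2) ≤
              ENNReal.ofReal (c' * (1 + z) * Real.exp (-(4 * L) + 2 * k) *
                Real.exp (-2 * z) *
                Real.exp (-c * ((min k (L - k) : ℕ) : ℝ) ^ ((1 : ℝ) / 4)))) →
          ENNReal.ofReal
              ((1 + z) * Real.exp (-2 * z) / ((1 + z) * Real.exp (-2 * z) + cc)) ≤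
            P (⋃ y, I y) := by
  classical
  set K := ∑' n : ℕ, Real.exp (-c * (n : ℝ) ^ ((1 : ℝ) / 4))
  have hf : Summable fun n : ℕ => Real.exp (-c * (n : ℝ) ^ ((1 : ℝ) / 4)) :=
    Real.summable_exp_neg_mul_rpow hc (by norm_num)
  have hα : 0 < c₀ / C := by positivity
  have hβ : 0 ≤ C * c' * (2 * K) := by positivity
  refine ⟨(c₀ / C + C * c' * (2 * K)) / (c₀ / C) ^ 2, 0, by positivity, ?_⟩
  intro L z Ω _ P _ ι _ I G _ hz _ hI _ hcard hcover hG hone htwo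
  have ha : 0 < (1 + z) * Real.exp (-2 * z) := by positivity
  have hS := mul_le_sum_measureReal_of_exp_le_card hc₀.le hz hC hcard fun y => (hone y).1
  have hD : ∑ p ∈ univ.offDiag, P.real (I p.1 ∩ I p.2) ≤
      C * c' * (2 * K) * ((1 + z) * Real.exp (-2 * z)) := by
    refine (sum_offDiag_measureReal_inter_le hc'.le hz hcover hG htwo).trans ?_
    rw [mul_right_comm]
    gcongr
    exact sum_Icc_min_sub_le_two_mul_tsum (fun n => (Real.exp_pos _).le) hf L
  rw [ENNReal.ofReal_le_iff_le_toReal (measure_ne_top _ _), ← measureReal_def]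
  exact div_add_le_of_sq_le_mul_add hα hβ ha hS (sum_nonneg fun _ _ => measureReal_nonneg) hD
    (sum_measureReal_sq_le_measureReal_iUnion_mul hI)

/-- Second-moment (Paley–Zygmund) lower bound: given one-point bounds
`c₀(1+z)e^{−2L}e^{−2z} ≤ P(I_y) ≤ C₀(1+z)e^{−2L}e^{−2z}` on a finite index set with
`|F_L| ≍ e^{2L}`, two-point bounds
`P(I_y ∩ I_{y'}) ≤ c'(1+z)e^{−4L+2k}e^{−2z}e^{−c·k_L^{1/4}}` for `(y,y') ∈ G_k` with
`|G_k| ≤ C e^{4L−2k}` (`k_L = min(k, L−k)`), one gets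
`P(∪_y I_y) ≥ (1+z)e^{−2z}/((1+z)e^{−2z} + c)` for a constant `c` independent of `L`
(large) and `z ∈ [0, log L]`. -/
theorem stmt19 (c' c c₀ C₀ C : ℝ) (hc' : 0 < c') (hc : 0 < c) (hc₀ : 0 < c₀)
    (hC₀ : 0 < C₀) (hC : 0 < C) :
    ∃ (cc : ℝ) (L₀ : ℕ), 0 < cc ∧
      ∀ (L : ℕ) (z : ℝ) (Ω : Type) (_ : MeasurableSpace Ω) (P : Measure Ω),
        IsProbabilityMeasure P →
        ∀ (ι : Type) (_ : Fintype ι) (I : ι → Set Ω) (G : ℕ → Finset (ι × ι)),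
          L₀ ≤ L → 0 ≤ z → z ≤ Real.log L →
          (∀ y, MeasurableSet (I y)) →
          ((Fintype.card ι : ℝ) ≤ C * Real.exp (2 * L)) →
          (Real.exp (2 * L) ≤ C * (Fintype.card ι : ℝ)) →
          (∀ y y' : ι, y ≠ y' → ∃ k, 1 ≤ k ∧ k ≤ L ∧ (y, y') ∈ G k) →
          (∀ k, 1 ≤ k → k ≤ L →
            ((G k).card : ℝ) ≤ C * Real.exp (4 * L - 2 * k)) →
          (∀ y, ENNReal.ofReal (c₀ * (1 + z) * Real.exp (-2 * L) * Real.exp (-2 * z)) ≤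
              P (I y) ∧
            P (I y) ≤
              ENNReal.ofReal (C₀ * (1 + z) * Real.exp (-2 * L) * Real.exp (-2 * z))) →
          (∀ k, 1 ≤ k → k ≤ L → ∀ p ∈ G k, p.1 ≠ p.2 →
            P (I p.1 ∩ I p.2) ≤
              ENNReal.ofReal (c' * (1 + z) * Real.exp (-(4 * L) + 2 * k) *
                Real.exp (-2 * z) *
                Real.exp (-c * ((min k (L - k) : ℕ) : ℝ) ^ ((1 : ℝ) / 4)))) →
          ENNReal.ofReal
              ((1 + z) * Real.exp (-2 * z) / ((1 + z) * Real.exp (-2 * z) + cc)) ≤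
            P (⋃ y, I y) :=
  stmt19_general c' c c₀ C₀ C hc' hc hc₀ hC
end
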